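/- Let $x, v, v_1, v_2, v_3 \in \mathbb{R}^d$, $\tau \in \mathbb{R}$, $\alpha, \beta > 0$, and suppose $v + v_1 = v_2 + v_3$ and $|v|^2 + |v_1|^2 = |v_2|^2 + |v_3|^2$. Then $e^{-\alpha(|x + \tau(v - v_2)|^2 + |x + \tau(v - v_3)|^2)} e^{-\beta(|v_2|^2 + |v_3|^2)} = e^{-\alpha |x|^2 - \beta |v|^2} \cdot e^{-\alpha |x + \tau (v - v_1)|^2} e^{-\beta |v_1|^2}$. -/
import Mathlib

open RealInnerProductSpace

/-- Factorization of the Gaussian weight on the resonant manifold. -/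
theorem gaussian_factorization_resonant
    (d : ℕ) (x v v1 v2 v3 : EuclideanSpace ℝ (Fin d)) (τ α β : ℝ)
    (hα : 0 < α) (hβ : 0 < β)
    (hmom : v + v1 = v2 + v3)
    (hen : ‖v‖ ^ 2 + ‖v1‖ ^ 2 = ‖v2‖ ^ 2 + ‖v3‖ ^ 2) :
    Real.exp (-α * (‖x + τ • (v - v2)‖ ^ 2 + ‖x + τ • (v - v3)‖ ^ 2))
        * Real.exp (-β * (‖v2‖ ^ 2 + ‖v3‖ ^ 2))
      = Real.exp (-α * ‖x‖ ^ 2 - β * ‖v‖ ^ 2)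
          * (Real.exp (-α * ‖x + τ • (v - v1)‖ ^ 2)
              * Real.exp (-β * ‖v1‖ ^ 2)) := by
  have hx : ⟪x, v⟫ + ⟪x, v1⟫ = ⟪x, v2⟫ + ⟪x, v3⟫ := by
    have := congrArg (fun w => ⟪x, w⟫) hmom
    simpa [inner_add_right] using this
  have hv : ⟪v, v⟫ + ⟪v, v1⟫ = ⟪v, v2⟫ + ⟪v, v3⟫ := by
    have := congrArg (fun w => ⟪v, w⟫) hmom
    simpa [inner_add_right] using this
  have hvv : ⟪v, v⟫ = ‖v‖ ^ 2 := real_inner_self_eq_norm_sq v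
  have hexp : ∀ w : EuclideanSpace ℝ (Fin d),
      ‖x + τ • (v - w)‖ ^ 2 = ‖x‖ ^ 2 + 2 * (τ * (⟪x, v⟫ - ⟪x, w⟫))
        + τ ^ 2 * (‖v‖ ^ 2 - 2 * ⟪v, w⟫ + ‖w‖ ^ 2) := by
    intro w
    rw [norm_add_sq_real, real_inner_smul_right, inner_sub_right, norm_smul]
    rw [mul_pow, Real.norm_eq_abs, sq_abs, norm_sub_sq_real]
  have hkey : ‖x + τ • (v - v2)‖ ^ 2 + ‖x + τ • (v - v3)‖ ^ 2
      = ‖x‖ ^ 2 + ‖x + τ • (v - v1)‖ ^ 2 := by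
    rw [hexp v1, hexp v2, hexp v3]
    linear_combination (2 * τ) * hx + τ ^ 2 * (2 * hv) - 2 * τ ^ 2 * hvv
      - τ ^ 2 * hen
  rw [← Real.exp_add, ← Real.exp_add, ← Real.exp_add, hkey]
  congr 1
  linear_combination β * hen
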